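/- Let n ≥ 1 and let b₁,…,bₙ be positive integers. Then the following identity holds in the field ℚ(Y) of rational functions: ∑_{I⊆{1,…,n}} M(n,I) ∏_{i∈I} Y^{b_i}/(1 − Y^{b_i}) = [∑_{w∈Sₙ} ∏_{j∈Des(w)} Y^{b_j}] / ∏_{i=1}^{n}(1 − Y^{b_i}), where for I = {i₁ < i₂ < ⋯ < i_l} the multinomial coefficient M(n,I) is binom(n, i_l)·binom(i_l, i_{l−1})⋯binom(i₂, i₁), and M(n,∅) = 1. -/

import Mathlib

open scoped BigOperators

/-- The values of `w ∈ Sₙ` as a function on `{0,…,n-1}` (0-based), extended by the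
identity outside this range. -/
def permVal {n : ℕ} (w : Equiv.Perm (Fin n)) (t : ℕ) : ℕ :=
  if h : t < n then (w ⟨t, h⟩ : ℕ) else t

/-- `Des(w) = {i ∈ {1,…,n-1} : w(i+1) < w(i)}`, the descent set of `w ∈ Sₙ`
(in 1-based positions). -/
def desP {n : ℕ} (w : Equiv.Perm (Fin n)) : Finset ℕ :=
  (Finset.Icc 1 (n - 1)).filter fun j => permVal w j < permVal w (j - 1)

/-- The multinomial coefficient `M(n, I) = binom(n, i_l)·binom(i_l, i_{l-1})⋯binom(i₂, i₁)`
for `I = {i₁ < i₂ < ⋯ < i_l}`, with `M(n, ∅) = 1`. -/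
def gaussM (n : ℕ) (I : Finset ℕ) : ℕ :=
  (List.zipWith Nat.choose ((I.sort (· ≤ ·)) ++ [n]).tail (I.sort (· ≤ ·))).prod


/-!
A permutation `w ∈ Sₙ` with `Des(w) ⊆ I` and `m = max I` is increasing on the positions after `m`,
so it is determined by the set of its values on the first `m` positions (`binom(n, m)` choices)
together with the relative order of those values, a permutation in `Sₘ` with descents in
`I \ {m}`. By induction, `M(n, I)` counts the `w` with `Des(w) ⊆ I`, whence
`∑_I M(n, I) ∏_{i ∈ I} tᵢ = ∑_w ∏_{i ∈ Des(w)} tᵢ ∏_{i ∉ Des(w)} (1 + tᵢ)`,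
and for `tᵢ = xᵢ / (1 - xᵢ)` one has `1 + tᵢ = 1 / (1 - xᵢ)`.
-/

open Finset

def chooseChain (a : ℕ) (L : List ℕ) : ℕ := (List.zipWith Nat.choose (L ++ [a]).tail L).prod

lemma chooseChain_append_singleton (a b : ℕ) (L : List ℕ) :
    chooseChain a (L ++ [b]) = a.choose b * chooseChain b L := by
  induction L with
  | nil => simp [chooseChain]
  | cons x L ih =>
    cases L with
    | nil => simp [chooseChain, mul_comm]
    | cons y L =>
      simp only [chooseChain, List.cons_append, List.tail_cons, List.zipWith_cons_cons,
        List.prod_cons] at ih ⊢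
      rw [ih]
      ring

lemma Finset.sort_insert_of_forall_lt {α : Type*} [LinearOrder α] {a : α} {s : Finset α}
    (h : ∀ b ∈ s, b < a) : (insert a s).sort (· ≤ ·) = s.sort (· ≤ ·) ++ [a] := by
  refine (sortedLT_sort _).eq_of_mem_iff ?_ (by simp [or_comm])
  rw [List.sortedLT_iff_pairwise, List.pairwise_append]
  exact ⟨List.sortedLT_iff_pairwise.mp (sortedLT_sort s), by simp, fun b hb a' ha' => by
    rw [List.mem_singleton.mp ha']
    exact h b (by simpa using hb)⟩

lemma gaussM_empty (n : ℕ) : gaussM n ∅ = 1 := by simp [gaussM]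

lemma gaussM_insert_of_forall_lt {n m : ℕ} {I : Finset ℕ} (h : ∀ i ∈ I, i < m) :
    gaussM n (insert m I) = n.choose m * gaussM m I := by
  change chooseChain n _ = n.choose m * chooseChain m _
  rw [sort_insert_of_forall_lt h, chooseChain_append_singleton]

section Descents

variable {n : ℕ}

lemma permVal_of_lt (w : Equiv.Perm (Fin n)) {t : ℕ} (h : t < n) :
    permVal w t = w ⟨t, h⟩ := dif_pos h

lemma mem_desP {w : Equiv.Perm (Fin n)} {j : ℕ} :
    j ∈ desP w ↔ (1 ≤ j ∧ j ≤ n - 1) ∧ permVal w j < permVal w (j - 1) := by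
  simp [desP]

lemma desP_subset_Icc (w : Equiv.Perm (Fin n)) : desP w ⊆ Icc 1 (n - 1) :=
  filter_subset _ _

lemma desP_subset_Icc_one_n (w : Equiv.Perm (Fin n)) : desP w ⊆ Icc 1 n :=
  (desP_subset_Icc w).trans (Icc_subset_Icc_right (Nat.sub_le n 1))

lemma strictMonoOn_permVal_of_forall_desP_le {w : Equiv.Perm (Fin n)} {a : ℕ}
    (h : ∀ j ∈ desP w, j ≤ a) : StrictMonoOn (permVal w) (Set.Ico a n) := by
  refine strictMonoOn_of_lt_succ Set.ordConnected_Ico fun j _ hj hj1 => ?_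
  simp only [Order.succ_eq_add_one, Set.mem_Ico] at hj hj1 ⊢
  have hnot : ¬ permVal w (j + 1) < permVal w j := fun hlt =>
    absurd (h (j + 1) (mem_desP.mpr ⟨⟨by omega, by omega⟩, hlt⟩)) (by omega)
  rw [permVal_of_lt w hj.2, permVal_of_lt w hj1.2] at hnot ⊢
  refine lt_of_le_of_ne (not_lt.mp hnot) fun heq => ?_
  have := congrArg Fin.val (w.injective (Fin.ext heq))
  simp at this

lemma apply_lt_apply_of_forall_desP_le {w : Equiv.Perm (Fin n)} {a : ℕ}
    (h : ∀ j ∈ desP w, j ≤ a) {p q : Fin n} (hap : a ≤ p) (hpq : p < q) : w p < w q := by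
  have := strictMonoOn_permVal_of_forall_desP_le h ⟨hap, p.2⟩ ⟨hap.trans hpq.le, q.2⟩ hpq
  rwa [permVal_of_lt w p.2, permVal_of_lt w q.2] at this

lemma desP_eq_empty_iff {w : Equiv.Perm (Fin n)} : desP w = ∅ ↔ w = 1 := by
  constructor
  · intro h
    have hw : StrictMono w := fun p q =>
      apply_lt_apply_of_forall_desP_le (by simp [h]) (Nat.zero_le _)
    ext p
    rw [(hw.range_inj strictMono_id).mp (by simp [w.surjective.range_eq])]
    rfl
  · rintro rfl
    ext j
    simp only [mem_desP, notMem_empty, iff_false, not_and, not_lt]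
    intro hj
    rw [permVal_of_lt _ (by omega : j < n), permVal_of_lt _ (by omega : j - 1 < n)]
    simp

end Descents

def permsWithDesSubset (n : ℕ) (I : Finset ℕ) : Finset (Equiv.Perm (Fin n)) :=
  {w | desP w ⊆ I}

section Shuffle

variable {n m : ℕ}

def headValues (m : ℕ) (w : Equiv.Perm (Fin n)) : Finset (Fin n) :=
  {v | (w.symm v : ℕ) < m}

@[simp]
lemma apply_mem_headValues {w : Equiv.Perm (Fin n)} {p : Fin n} :
    w p ∈ headValues m w ↔ (p : ℕ) < m := by
  simp [headValues]

lemma card_headValues (hmn : m ≤ n) (w : Equiv.Perm (Fin n)) : #(headValues m w) = m := by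
  calc #(headValues m w) = #{p : Fin n | (p : ℕ) < m} :=
        card_nbij' w.symm w (fun v hv => by simpa [headValues] using hv)
          (fun p hp => by simpa using hp) (fun v _ => by simp) (fun p _ => by simp)
    _ = m := by rw [Fin.card_filter_val_lt, min_eq_right hmn]

lemma le_of_card_eq {H : Finset (Fin n)} (hH : #H = m) : m ≤ n :=
  hH ▸ (card_le_univ H).trans_eq (Fintype.card_fin n)

lemma card_compl_of_card_eq {H : Finset (Fin n)} (hH : #H = m) : #Hᶜ = n - m := by
  rw [card_compl, Fintype.card_fin, hH]

variable (H : Finset (Fin n)) (hH : #H = m) (w' : Equiv.Perm (Fin m))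

def shuffleFun (p : Fin n) : Fin n :=
  if h : (p : ℕ) < m then H.orderEmbOfFin hH (w' ⟨p, h⟩)
  else Hᶜ.orderEmbOfFin (card_compl_of_card_eq hH) ⟨p - m, by have := p.2; omega⟩

lemma shuffleFun_of_lt {p : Fin n} (h : (p : ℕ) < m) :
    shuffleFun H hH w' p = H.orderEmbOfFin hH (w' ⟨p, h⟩) := dif_pos h

lemma shuffleFun_of_le {p : Fin n} (h : m ≤ (p : ℕ)) :
    shuffleFun H hH w' p =
      Hᶜ.orderEmbOfFin (card_compl_of_card_eq hH) ⟨p - m, by have := p.2; omega⟩ :=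
  dif_neg (by omega)

lemma shuffleFun_mem_iff {p : Fin n} : shuffleFun H hH w' p ∈ H ↔ (p : ℕ) < m := by
  by_cases h : (p : ℕ) < m
  · simp only [shuffleFun_of_lt H hH w' h, orderEmbOfFin_mem, h]
  · have := orderEmbOfFin_mem Hᶜ (card_compl_of_card_eq hH) ⟨p - m, by have := p.2; omega⟩
    rw [shuffleFun_of_le H hH w' (by omega)]
    exact iff_of_false (mem_compl.mp this) h

lemma shuffleFun_injective : Function.Injective (shuffleFun H hH w') := by
  intro p q hpq
  have hiff : (p : ℕ) < m ↔ (q : ℕ) < m := by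
    rw [← shuffleFun_mem_iff H hH w', hpq, shuffleFun_mem_iff]
  by_cases hp : (p : ℕ) < m
  · rw [shuffleFun_of_lt H hH w' hp, shuffleFun_of_lt H hH w' (hiff.mp hp)] at hpq
    simpa [Fin.ext_iff] using w'.injective ((H.orderEmbOfFin hH).injective hpq)
  · rw [shuffleFun_of_le H hH w' (not_lt.mp hp),
      shuffleFun_of_le H hH w' (not_lt.mp (hiff.not.mp hp))] at hpq
    have := congrArg Fin.val ((Hᶜ.orderEmbOfFin _).injective hpq)
    simp only at this
    omega

noncomputable def shuffle : Equiv.Perm (Fin n) :=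
  Equiv.ofBijective _ (Finite.injective_iff_bijective.mp (shuffleFun_injective H hH w'))

lemma shuffle_apply (p : Fin n) : shuffle H hH w' p = shuffleFun H hH w' p := rfl

lemma headValues_shuffle : headValues m (shuffle H hH w') = H := by
  ext v
  obtain ⟨p, rfl⟩ := (shuffle H hH w').surjective v
  rw [apply_mem_headValues, shuffle_apply, shuffleFun_mem_iff]

lemma mem_desP_shuffle_iff {j : ℕ} (hj : j < m) :
    j ∈ desP (shuffle H hH w') ↔ j ∈ desP w' := by
  have hmn := le_of_card_eq hH
  simp only [mem_desP]
  rw [permVal_of_lt _ (by omega : j < n), permVal_of_lt _ (by omega : j - 1 < n),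
    permVal_of_lt _ hj, permVal_of_lt _ (by omega : j - 1 < m), shuffle_apply, shuffle_apply,
    shuffleFun_of_lt H hH w' (p := ⟨j, _⟩) hj, shuffleFun_of_lt H hH w' (p := ⟨j - 1, _⟩)
      (by simp only; omega)]
  simp only [Fin.val_fin_lt, OrderEmbedding.lt_iff_lt]
  omega

lemma notMem_desP_shuffle {j : ℕ} (hj : m < j) : j ∉ desP (shuffle H hH w') := by
  rw [mem_desP, not_and, not_lt]
  intro hjn
  rw [permVal_of_lt _ (by omega : j < n), permVal_of_lt _ (by omega : j - 1 < n), shuffle_apply,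
    shuffle_apply, shuffleFun_of_le H hH w' (p := ⟨j, _⟩) (by simp only; omega),
    shuffleFun_of_le H hH w' (p := ⟨j - 1, _⟩) (by simp only; omega)]
  simp only [Fin.val_fin_le, OrderEmbedding.le_iff_le, Fin.mk_le_mk]
  omega

lemma desP_shuffle_subset : desP (shuffle H hH w') ⊆ insert m (desP w') := by
  intro j hj
  rcases lt_trichotomy j m with h | rfl | h
  · exact mem_insert_of_mem ((mem_desP_shuffle_iff H hH w' h).mp hj)
  · exact mem_insert_self _ _
  · exact absurd hj (notMem_desP_shuffle H hH w' h)

lemma desP_subset_desP_shuffle : desP w' ⊆ desP (shuffle H hH w') := fun j hj =>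
  (mem_desP_shuffle_iff H hH w' (by have := mem_Icc.mp (desP_subset_Icc w' hj); omega)).mpr hj

lemma shuffle_injective : Function.Injective (shuffle H hH) := by
  intro u v huv
  ext p : 1
  have hp : (p : ℕ) < m := p.2
  have := congrArg (· ⟨p, hp.trans_le (le_of_card_eq hH)⟩) huv
  simp only [shuffle_apply, shuffleFun_of_lt H hH u (p := ⟨p, _⟩) hp,
    shuffleFun_of_lt H hH v (p := ⟨p, _⟩) hp] at this
  simpa using this

lemma exists_shuffle_eq {w : Equiv.Perm (Fin n)} (hw : headValues m w = H)
    (hdes : ∀ j ∈ desP w, j ≤ m) : ∃ w', shuffle H hH w' = w := by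
  have hmn := le_of_card_eq hH
  have hhead (p : Fin m) : w ⟨p, by omega⟩ ∈ H := hw ▸ apply_mem_headValues.mpr p.2
  let pattern (p : Fin m) : Fin m := (H.orderIsoOfFin hH).symm ⟨w ⟨p, by omega⟩, hhead p⟩
  have hpattern : Function.Injective pattern := fun p q hpq => by
    simpa [pattern, Fin.ext_iff] using w.injective (Subtype.ext_iff.mp
      ((H.orderIsoOfFin hH).symm.injective hpq))
  refine ⟨Equiv.ofBijective pattern (Finite.injective_iff_bijective.mp hpattern), ?_⟩
  ext p : 1
  rw [shuffle_apply]
  by_cases hp : (p : ℕ) < m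
  · rw [shuffleFun_of_lt H hH _ hp, ← coe_orderIsoOfFin_apply]
    simp [pattern]
  · have htail : (fun k : Fin (n - m) => w ⟨m + k, by omega⟩) = Hᶜ.orderEmbOfFin
        (card_compl_of_card_eq hH) := by
      refine orderEmbOfFin_unique _ (fun k => ?_) fun k l hkl =>
        apply_lt_apply_of_forall_desP_le hdes (by simp) (by simpa using hkl)
      simp [← hw]
    rw [shuffleFun_of_le H hH _ (not_lt.mp hp), ← htail]
    exact congrArg w (Fin.ext (by simp only; omega))

end Shuffle

lemma card_filter_headValues_eq {n m : ℕ} {I : Finset ℕ} (hI : ∀ i ∈ I, i < m)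
    {H : Finset (Fin n)} (hH : #H = m) :
    #{w ∈ permsWithDesSubset n (insert m I) | headValues m w = H} =
      #(permsWithDesSubset m I) := by
  symm
  refine card_nbij (shuffle H hH) (fun w' hw' => ?_) (shuffle_injective H hH).injOn
    fun w hw => ?_
  · simp only [permsWithDesSubset, coe_filter, mem_filter, mem_univ, true_and,
      Set.mem_ofPred_eq] at hw' ⊢
    exact ⟨(desP_shuffle_subset H hH w').trans (insert_subset_insert m hw'),
      headValues_shuffle H hH w'⟩
  · simp only [permsWithDesSubset, coe_filter, mem_filter, mem_univ, true_and,
      Set.mem_ofPred_eq] at hw ⊢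
    obtain ⟨hdes, hw⟩ := hw
    obtain ⟨w', rfl⟩ := exists_shuffle_eq H hH hw fun j hj => by
      rcases mem_insert.mp (hdes hj) with rfl | hj
      exacts [le_rfl, (hI j hj).le]
    refine ⟨w', fun j hj => ?_, rfl⟩
    have hjm : j < m := by have := mem_Icc.mp (desP_subset_Icc w' hj); omega
    exact (mem_insert.mp (hdes (desP_subset_desP_shuffle H hH w' hj))).resolve_left hjm.ne

lemma card_permsWithDesSubset_insert {n m : ℕ} (hmn : m ≤ n) {I : Finset ℕ}
    (hI : ∀ i ∈ I, i < m) :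
    #(permsWithDesSubset n (insert m I)) = n.choose m * #(permsWithDesSubset m I) := by
  rw [card_eq_sum_card_fiberwise (f := headValues m) (t := powersetCard m univ)
      fun w _ => mem_powersetCard.mpr ⟨subset_univ _, card_headValues hmn w⟩,
    sum_congr rfl fun H hH => card_filter_headValues_eq hI (mem_powersetCard.mp hH).2,
    sum_const, card_powersetCard, card_univ, Fintype.card_fin, smul_eq_mul]

theorem card_permsWithDesSubset {n : ℕ} {I : Finset ℕ} (hI : ∀ i ∈ I, i ≤ n) :
    #(permsWithDesSubset n I) = gaussM n I := by
  induction I using Finset.induction_on_max generalizing n with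
  | empty =>
    have : permsWithDesSubset n ∅ = {1} := by
      ext w
      simp [permsWithDesSubset, desP_eq_empty_iff]
    rw [this, card_singleton, gaussM_empty]
  | insert m I hlt ih =>
    rw [card_permsWithDesSubset_insert (hI m (mem_insert_self m I)) hlt,
      gaussM_insert_of_forall_lt hlt, ih fun i hi => (hlt i hi).le]

lemma sum_filter_superset_prod {ι R : Type*} [DecidableEq ι] [CommSemiring R]
    {D S : Finset ι} (hDS : D ⊆ S) (t : ι → R) :
    ∑ I ∈ S.powerset with D ⊆ I, ∏ i ∈ I, t i = (∏ i ∈ D, t i) * ∏ i ∈ S \ D, (1 + t i) := by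
  have hdisj {J : Finset ι} (hJ : J ∈ (S \ D).powerset) : Disjoint D J :=
    disjoint_sdiff.mono_right (mem_powerset.mp hJ)
  rw [← Icc_eq_filter_powerset, Icc_eq_image_powerset hDS, prod_one_add, mul_sum,
    sum_image fun J hJ K hK hJK => by
      rw [← union_sdiff_cancel_left (hdisj hJ), hJK, union_sdiff_cancel_left (hdisj hK)]]
  exact sum_congr rfl fun J hJ => prod_union (hdisj hJ)

lemma sum_gaussM_mul_prod {R : Type*} [CommSemiring R] (n : ℕ) (t : ℕ → R) :
    ∑ I ∈ (Icc 1 n).powerset, (gaussM n I : R) * ∏ i ∈ I, t i =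
      ∑ w : Equiv.Perm (Fin n), (∏ i ∈ desP w, t i) * ∏ i ∈ Icc 1 n \ desP w, (1 + t i) := by
  calc ∑ I ∈ (Icc 1 n).powerset, (gaussM n I : R) * ∏ i ∈ I, t i
      = ∑ I ∈ (Icc 1 n).powerset, ∑ w : Equiv.Perm (Fin n),
          if desP w ⊆ I then ∏ i ∈ I, t i else 0 := sum_congr rfl fun I hI => by
        rw [← card_permsWithDesSubset fun i hi => (mem_Icc.mp (mem_powerset.mp hI hi)).2,
          permsWithDesSubset, card_filter, Nat.cast_sum, sum_mul]
        simp
    _ = _ := by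
      rw [sum_comm]
      exact sum_congr rfl fun w _ => by
        rw [← sum_filter, sum_filter_superset_prod (desP_subset_Icc_one_n w)]

lemma prod_div_one_sub_mul_prod_one_add {ι K : Type*} [DecidableEq ι] [Field K]
    {D S : Finset ι} (hDS : D ⊆ S) {x : ι → K} (hx : ∀ i ∈ S, 1 - x i ≠ 0) :
    (∏ i ∈ D, x i / (1 - x i)) * ∏ i ∈ S \ D, (1 + x i / (1 - x i)) =
      (∏ i ∈ D, x i) / ∏ i ∈ S, (1 - x i) := by
  have hadd : ∀ i ∈ S \ D, 1 + x i / (1 - x i) = (1 - x i)⁻¹ := fun i hi => by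
    field_simp [hx i (mem_sdiff.mp hi).1]
    ring
  rw [prod_congr rfl hadd, prod_inv_distrib, prod_div_distrib, ← prod_sdiff hDS]
  field_simp

lemma RatFunc.one_sub_X_pow_ne_zero {K : Type*} [Field K] {k : ℕ} (hk : k ≠ 0) :
    (1 - RatFunc.X ^ k : RatFunc K) ≠ 0 := by
  rw [sub_ne_zero, ne_comm, ← RatFunc.algebraMap_X, ← map_pow,
    ← map_one (algebraMap (Polynomial K) (RatFunc K)), (RatFunc.algebraMap_injective K).ne_iff]
  exact fun h => hk (by simpa using congrArg Polynomial.natDegree h)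

theorem stmt15_general (n : ℕ) (b : ℕ → ℕ)
    (hb : ∀ i ∈ Finset.Icc 1 n, 0 < b i) :
    ∑ I ∈ (Finset.Icc 1 n).powerset,
        (gaussM n I : RatFunc ℚ) *
          ∏ i ∈ I, ((RatFunc.X : RatFunc ℚ) ^ b i / (1 - (RatFunc.X : RatFunc ℚ) ^ b i)) =
      (∑ w : Equiv.Perm (Fin n), ∏ j ∈ desP w, (RatFunc.X : RatFunc ℚ) ^ b j) /
        ∏ i ∈ Finset.Icc 1 n, (1 - (RatFunc.X : RatFunc ℚ) ^ b i) := by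
  rw [sum_gaussM_mul_prod, sum_div]
  exact sum_congr rfl fun w _ => prod_div_one_sub_mul_prod_one_add (desP_subset_Icc_one_n w)
    fun i hi => RatFunc.one_sub_X_pow_ne_zero (hb i hi).ne'

theorem stmt15 (n : ℕ) (hn : 1 ≤ n) (b : ℕ → ℕ)
    (hb : ∀ i ∈ Finset.Icc 1 n, 0 < b i) :
    ∑ I ∈ (Finset.Icc 1 n).powerset,
        (gaussM n I : RatFunc ℚ) *
          ∏ i ∈ I, ((RatFunc.X : RatFunc ℚ) ^ b i / (1 - (RatFunc.X : RatFunc ℚ) ^ b i)) =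
      (∑ w : Equiv.Perm (Fin n), ∏ j ∈ desP w, (RatFunc.X : RatFunc ℚ) ^ b j) /
        ∏ i ∈ Finset.Icc 1 n, (1 - (RatFunc.X : RatFunc ℚ) ^ b i) :=
  stmt15_general n b hb
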